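/- arXiv:2006.06832 — 2 statements merged into one kernel-verified Lean document; each statement's English description precedes it below -/
import Mathlib

section
/- Let S ⊆ [m] × [n] be a set of indices whose bipartite graph G_S is doubly chordal bipartite (every cycle of length ≥ 6 has at least two chords). Fix a column j₀ and let B_α, B_β be two blocks of S corresponding to column j₀ (maximal sets of columns whose restrictions to the nonzero rows of column j₀ agree). If rows(B_α) ∩ rows(B_β) ≠ ∅, then rows(B_α) ⊆ rows(B_β) or rows(B_β) ⊆ rows(B_α). -/
open Finset

open scoped Classical

/-- The bipartite graph associated to `S ⊆ [m] × [n]`. -/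
def qiGraph (m n : ℕ) (S : Finset (Fin m × Fin n)) : SimpleGraph (Fin m ⊕ Fin n) :=
  SimpleGraph.fromRel (fun a b =>
    ∃ p : Fin m × Fin n, p ∈ S ∧ a = Sum.inl p.1 ∧ b = Sum.inr p.2)

/-- A chord of a closed walk: an edge of `G` between vertices of the walk that is not
an edge of the walk. -/
def IsChord {V : Type*} (G : SimpleGraph V) {v : V} (c : G.Walk v v) (e : Sym2 V) : Prop :=
  e ∈ G.edgeSet ∧ e ∉ c.edges ∧ ∀ x ∈ e, x ∈ c.support

/-- Every cycle of length at least 6 has at least one chord. -/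
def ChordalBipartite {V : Type*} (G : SimpleGraph V) : Prop :=
  ∀ (v : V) (c : G.Walk v v), c.IsCycle → 6 ≤ c.length → ∃ e : Sym2 V, IsChord G c e

/-- Every cycle of length at least 6 has at least two chords. -/
def DoublyChordalBipartite {V : Type*} (G : SimpleGraph V) : Prop :=
  ∀ (v : V) (c : G.Walk v v), c.IsCycle → 6 ≤ c.length →
    ∃ e₁ e₂ : Sym2 V, e₁ ≠ e₂ ∧ IsChord G c e₁ ∧ IsChord G c e₂

variable {m n : ℕ}

/-- A (nonempty) clique in `S`: a subset of `S` of the form `R × T`. -/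
def IsGridClique (S C : Finset (Fin m × Fin n)) : Prop :=
  C.Nonempty ∧ C ⊆ S ∧ ∀ p ∈ C, ∀ q ∈ C, (p.1, q.2) ∈ C

/-- A maximal clique in `S`. -/
def IsMaxClique (S C : Finset (Fin m × Fin n)) : Prop :=
  IsGridClique S C ∧ ∀ C', IsGridClique S C' → C ⊆ C' → C = C'

/-- `Max(S)`: the set of maximal cliques of `S`. -/
noncomputable def maxCliques (S : Finset (Fin m × Fin n)) : Finset (Finset (Fin m × Fin n)) :=
  S.powerset.filter (IsMaxClique S)

/-- `Max(x)`: maximal cliques containing the index `x`. -/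
noncomputable def maxCliquesAt (S : Finset (Fin m × Fin n)) (x : Fin m × Fin n) :
    Finset (Finset (Fin m × Fin n)) :=
  (maxCliques S).filter (fun D => x ∈ D)

/-- Pairwise intersections of distinct maximal cliques of `S`. -/
noncomputable def pairInts (S : Finset (Fin m × Fin n)) : Finset (Finset (Fin m × Fin n)) :=
  ((maxCliques S ×ˢ maxCliques S).filter (fun P => P.1 ≠ P.2)).image (fun P => P.1 ∩ P.2)

/-- `Int(S)`: containment-maximal pairwise intersections of maximal cliques of `S`. -/
noncomputable def maxInts (S : Finset (Fin m × Fin n)) : Finset (Finset (Fin m × Fin n)) :=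
  (pairInts S).filter (fun C => ∀ C' ∈ pairInts S, C ⊆ C' → C = C')

/-- Pairwise intersections of distinct elements of `Max(x)`. -/
noncomputable def pairIntsAt (S : Finset (Fin m × Fin n)) (x : Fin m × Fin n) :
    Finset (Finset (Fin m × Fin n)) :=
  ((maxCliquesAt S x ×ˢ maxCliquesAt S x).filter (fun P => P.1 ≠ P.2)).image
    (fun P => P.1 ∩ P.2)

/-- `Int(x)`: containment-maximal pairwise intersections of elements of `Max(x)`. -/
noncomputable def maxIntsAt (S : Finset (Fin m × Fin n)) (x : Fin m × Fin n) :
    Finset (Finset (Fin m × Fin n)) :=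
  (pairIntsAt S x).filter (fun C => ∀ C' ∈ pairIntsAt S x, C ⊆ C' → C = C')

/-- The rows of column `j` that are also nonzero rows of column `j₀`. -/
noncomputable def colRows (S : Finset (Fin m × Fin n)) (j₀ j : Fin n) : Finset (Fin m) :=
  Finset.univ.filter (fun i => (i, j) ∈ S ∧ (i, j₀) ∈ S)

/-- The clique induced by the block (w.r.t. column `j₀`) of the column `j`. -/
noncomputable def inducedClique (S : Finset (Fin m × Fin n)) (j₀ j : Fin n) :
    Finset (Fin m × Fin n) :=
  Finset.univ.filter (fun p => p.1 ∈ colRows S j₀ j ∧ colRows S j₀ j ⊆ colRows S j₀ p.2)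

/-- The row indices of a subset of `S`. -/
noncomputable def rowsOf (D : Finset (Fin m × Fin n)) : Finset (Fin m) := D.image Prod.fst

/-- An element of the poset `P(j₀)`: a maximal clique of `S` meeting column `j₀`. -/
def PNode (S : Finset (Fin m × Fin n)) (j₀ : Fin n) (D : Finset (Fin m × Fin n)) : Prop :=
  IsMaxClique S D ∧ ∃ i, (i, j₀) ∈ D

/-- `PCovers S j₀ Dβ Dα` means `Dα ⋖ Dβ` in the poset `P(j₀)` (ordered by
containment of row sets). -/
def PCovers (S : Finset (Fin m × Fin n)) (j₀ : Fin n) (Dβ Dα : Finset (Fin m × Fin n)) : Prop :=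
  PNode S j₀ Dα ∧ PNode S j₀ Dβ ∧ rowsOf Dα ⊂ rowsOf Dβ ∧
    ¬ ∃ Dγ, PNode S j₀ Dγ ∧ rowsOf Dα ⊂ rowsOf Dγ ∧ rowsOf Dγ ⊂ rowsOf Dβ

/-- `C⁺`: the sum of the entries of `u` indexed by `C`. -/
def cliqueSum (u : Fin m × Fin n → ℝ) (C : Finset (Fin m × Fin n)) : ℝ := ∑ x ∈ C, u x

/-- `u_{i+}`: the `i`-th row marginal of `u` over `S`. -/
noncomputable def rowMarg (S : Finset (Fin m × Fin n)) (u : Fin m × Fin n → ℝ) (i : Fin m) : ℝ :=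
  ∑ x ∈ S.filter (fun x => x.1 = i), u x

/-- `u_{+j}`: the `j`-th column marginal of `u` over `S`. -/
noncomputable def colMarg (S : Finset (Fin m × Fin n)) (u : Fin m × Fin n → ℝ) (j : Fin n) : ℝ :=
  ∑ x ∈ S.filter (fun x => x.2 = j), u x

/-- `u_{++}`: the total sum of `u` over `S`. -/
def totalSum (S : Finset (Fin m × Fin n)) (u : Fin m × Fin n → ℝ) : ℝ := ∑ x ∈ S, u x

lemma qi_adj {S : Finset (Fin m × Fin n)} {i : Fin m} {j : Fin n} (h : (i, j) ∈ S) :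
    (qiGraph m n S).Adj (Sum.inl i) (Sum.inr j) := by
  refine ⟨by simp, Or.inl ⟨(i, j), h, rfl, rfl⟩⟩

lemma qi_adj_iff {S : Finset (Fin m × Fin n)} {a b : Fin m ⊕ Fin n} :
    (qiGraph m n S).Adj a b ↔
      (∃ p ∈ S, a = Sum.inl p.1 ∧ b = Sum.inr p.2) ∨
      (∃ p ∈ S, b = Sum.inl p.1 ∧ a = Sum.inr p.2) := by
  constructor
  · rintro ⟨hne, h | h⟩
    · exact Or.inl (by obtain ⟨p, hp, h1, h2⟩ := h; exact ⟨p, hp, h1, h2⟩)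
    · exact Or.inr (by obtain ⟨p, hp, h1, h2⟩ := h; exact ⟨p, hp, h1, h2⟩)
  · rintro (⟨p, hp, rfl, rfl⟩ | ⟨p, hp, rfl, rfl⟩)
    · exact qi_adj hp
    · exact (qi_adj hp).symm

set_option maxHeartbeats 1600000 in
private lemma qi_sixcycle_aux (S : Finset (Fin m × Fin n)) (iα i iβ : Fin m) (jα jβ j₀ : Fin n)
    (h1 : (iα, jα) ∈ S) (h2 : (i, jα) ∈ S) (h3 : (i, jβ) ∈ S) (h4 : (iβ, jβ) ∈ S)
    (h5 : (iβ, j₀) ∈ S) (h6 : (iα, j₀) ∈ S)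
    (hA : (iα, jβ) ∉ S) (hB : (iβ, jα) ∉ S)
    (hii : iα ≠ i) (hiib : iα ≠ iβ) (hib : i ≠ iβ)
    (hjj : jα ≠ jβ) (hja : jα ≠ j₀) (hjb : jβ ≠ j₀)
    (hDC : DoublyChordalBipartite (qiGraph m n S)) : False := by
  set G := qiGraph m n S with hG
  let c : G.Walk (Sum.inl iα) (Sum.inl iα) :=
    .cons (qi_adj h1) (.cons (qi_adj h2).symm (.cons (qi_adj h3)
      (.cons (qi_adj h4).symm (.cons (qi_adj h5) (.cons (qi_adj h6).symm .nil)))))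
  have hcyc : c.IsCycle := by
    simp [SimpleGraph.Walk.isCycle_def, SimpleGraph.Walk.isTrail_def, c,
      Sym2.eq, Sym2.rel_iff', hii, hiib, hib, hjj, hja, hjb, hii.symm, hiib.symm, hib.symm,
      hjj.symm, hja.symm, hjb.symm]
  have hsupp : c.support = [Sum.inl iα, Sum.inr jα, Sum.inl i, Sum.inr jβ,
      Sum.inl iβ, Sum.inr j₀, Sum.inl iα] := rfl
  have hedges : c.edges = [s(Sum.inl iα, Sum.inr jα), s(Sum.inr jα, Sum.inl i),
      s(Sum.inl i, Sum.inr jβ), s(Sum.inr jβ, Sum.inl iβ), s(Sum.inl iβ, Sum.inr j₀),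
      s(Sum.inr j₀, Sum.inl iα)] := rfl
  have hlen : 6 ≤ c.length := le_of_eq rfl
  obtain ⟨e₁, e₂, hnee, hc1, hc2⟩ := hDC _ c hcyc hlen
  have hchord : ∀ e, IsChord G c e → e = s(Sum.inl i, Sum.inr j₀) := by
    rintro e ⟨he, hne, hsup⟩
    rw [hedges] at hne
    simp only [hsupp] at hsup
    clear hc1 hc2 hcyc hDC hedges hsupp hlen hnee
    induction e using Sym2.ind with
    | _ a b =>
    rw [SimpleGraph.mem_edgeSet, hG, qi_adj_iff] at he
    have ha := hsup a (Sym2.mem_mk_left a b)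
    have hb := hsup b (Sym2.mem_mk_right a b)
    clear hsup
    rcases he with ⟨⟨i', j'⟩, hp, rfl, rfl⟩ | ⟨⟨i', j'⟩, hp, rfl, rfl⟩
    · simp only [List.mem_cons, List.not_mem_nil, Sum.inl.injEq, Sum.inr.injEq,
        reduceCtorEq, false_or, or_false] at ha hb
      simp only [List.mem_cons, List.not_mem_nil, or_false, Sym2.eq, Sym2.rel_iff',
        Prod.mk.injEq, Prod.swap_prod_mk, Sum.inl.injEq, Sum.inr.injEq,
        reduceCtorEq, and_false, false_and, or_false, false_or, not_or] at hne
      have ha' : i' = iα ∨ i' = i ∨ i' = iβ := by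
        rcases ha with h | h | h | h
        exacts [Or.inl h, Or.inr (Or.inl h), Or.inr (Or.inr h), Or.inl h]
      have hb' : j' = jα ∨ j' = jβ ∨ j' = j₀ := hb
      clear ha hb
      rcases ha' with rfl | rfl | rfl <;> rcases hb' with rfl | rfl | rfl <;> simp_all
    · simp only [List.mem_cons, List.not_mem_nil, Sum.inl.injEq, Sum.inr.injEq,
        reduceCtorEq, false_or, or_false] at ha hb
      rw [Sym2.eq_swap] at hne ⊢
      simp only [List.mem_cons, List.not_mem_nil, or_false, Sym2.eq, Sym2.rel_iff',
        Prod.mk.injEq, Prod.swap_prod_mk, Sum.inl.injEq, Sum.inr.injEq,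
        reduceCtorEq, and_false, false_and, or_false, false_or, not_or] at hne
      have ha' : j' = jα ∨ j' = jβ ∨ j' = j₀ := ha
      have hb' : i' = iα ∨ i' = i ∨ i' = iβ := by
        rcases hb with h | h | h | h
        exacts [Or.inl h, Or.inr (Or.inl h), Or.inr (Or.inr h), Or.inl h]
      clear ha hb
      rcases ha' with rfl | rfl | rfl <;> rcases hb' with rfl | rfl | rfl <;> simp_all
  exact hnee ((hchord _ hc1).trans (hchord _ hc2).symm)

lemma mem_colRows {S : Finset (Fin m × Fin n)} {j₀ j : Fin n} {i : Fin m} :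
    i ∈ colRows S j₀ j ↔ (i, j) ∈ S ∧ (i, j₀) ∈ S := by
  simp [colRows]

/-- DS-free condition: if `G_S` is doubly chordal bipartite, then the
row sets (within the nonzero rows of column `j₀`) of any two blocks of columns are
nested whenever they intersect. -/
theorem blocks_nested_of_doublyChordalBipartite (m n : ℕ) (S : Finset (Fin m × Fin n))
    (hS : DoublyChordalBipartite (qiGraph m n S)) (j₀ jα jβ : Fin n)
    (hmeet : (colRows S j₀ jα ∩ colRows S j₀ jβ).Nonempty) :
    colRows S j₀ jα ⊆ colRows S j₀ jβ ∨ colRows S j₀ jβ ⊆ colRows S j₀ jα := by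
  by_contra hcon
  push_neg at hcon
  obtain ⟨hAB, hBA⟩ := hcon
  rw [Finset.not_subset] at hAB hBA
  obtain ⟨iα, hiαA, hiαB⟩ := hAB
  obtain ⟨iβ, hiβB, hiβA⟩ := hBA
  obtain ⟨i, hi⟩ := hmeet
  rw [Finset.mem_inter] at hi
  obtain ⟨hiA, hiB⟩ := hi
  rw [mem_colRows] at hiαA hiβB hiA hiB
  obtain ⟨h1, h6⟩ := hiαA
  obtain ⟨h4, h5⟩ := hiβB
  obtain ⟨h2, -⟩ := hiA
  obtain ⟨h3, -⟩ := hiB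
  have hA : (iα, jβ) ∉ S := fun h => hiαB (mem_colRows.2 ⟨h, h6⟩)
  have hB : (iβ, jα) ∉ S := fun h => hiβA (mem_colRows.2 ⟨h, h5⟩)
  have hii : iα ≠ i := fun h => hA (h ▸ h3)
  have hiib : iα ≠ iβ := fun h => hA (h ▸ h4)
  have hib : i ≠ iβ := fun h => hB (h ▸ h2)
  have hjj : jα ≠ jβ := fun h => hA (h ▸ h1)
  have hja : jα ≠ j₀ := fun h => hB (h ▸ h5)
  have hjb : jβ ≠ j₀ := fun h => hA (h ▸ h6)
  exact qi_sixcycle_aux S iα i iβ jα jβ j₀ h1 h2 h3 h4 h5 h6 hA hB hii hiib hib hjj hja hjb hS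
end

section
/- Let S ⊆ [m] × [n] with G_S doubly chordal bipartite, fix column j₀, and let D_β be a maximal clique meeting column j₀ covering exactly D_{α₁},…,D_{α_ℓ} in the poset P(j₀). Let r₁,…,r_a be the rows of D_β not contained in any D_{α_k}. Then the sum of u-entries over D_β satisfies D_β⁺ = Σ_{i=1}^{a} u_{r_i +} + Σ_{k=1}^{ℓ} (D_{α_k} ∩ D_β)⁺, where u_{r_i +} = Σ_{j : (r_i, j) ∈ S} u_{r_i j} and C⁺ = Σ_{(i,j) ∈ C} u_{ij}. -/
open Finset

open scoped Classical

variable {m n : ℕ}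

namespace QIAux

variable {m n : ℕ}

noncomputable def colsOf (D : Finset (Fin m × Fin n)) : Finset (Fin n) := D.image Prod.snd

lemma qiGraph_adj {S : Finset (Fin m × Fin n)} {i : Fin m} {j : Fin n} :
    (qiGraph m n S).Adj (Sum.inl i) (Sum.inr j) ↔ (i, j) ∈ S := by
  simp only [qiGraph, SimpleGraph.fromRel_adj]
  constructor
  · rintro ⟨-, ⟨p, hp, h1, h2⟩ | ⟨p, hp, h1, h2⟩⟩
    · cases Sum.inl.inj h1; cases Sum.inr.inj h2; exact hp
    · exact absurd h1 (by simp)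
  · intro h
    exact ⟨by simp, Or.inl ⟨(i, j), h, rfl, rfl⟩⟩

lemma mem_rowsOf {D : Finset (Fin m × Fin n)} {i : Fin m} :
    i ∈ rowsOf D ↔ ∃ j, (i, j) ∈ D := by
  constructor
  · intro h
    simp only [rowsOf, Finset.mem_image] at h
    obtain ⟨⟨a, b⟩, h, rfl⟩ := h
    exact ⟨b, h⟩
  · rintro ⟨j, h⟩
    exact Finset.mem_image.2 ⟨(i, j), h, rfl⟩

lemma mem_colsOf {D : Finset (Fin m × Fin n)} {j : Fin n} :
    j ∈ colsOf D ↔ ∃ i, (i, j) ∈ D := by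
  constructor
  · intro h
    simp only [colsOf, Finset.mem_image] at h
    obtain ⟨⟨a, b⟩, h, rfl⟩ := h
    exact ⟨a, h⟩
  · rintro ⟨i, h⟩
    exact Finset.mem_image.2 ⟨(i, j), h, rfl⟩

lemma gridClique_eq_product {S C : Finset (Fin m × Fin n)} (h : IsGridClique S C) :
    C = rowsOf C ×ˢ colsOf C := by
  ext ⟨i, j⟩
  simp only [Finset.mem_product, mem_rowsOf, mem_colsOf]
  constructor
  · intro hij; exact ⟨⟨j, hij⟩, ⟨i, hij⟩⟩
  · rintro ⟨⟨j', hj'⟩, ⟨i', hi'⟩⟩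
    exact h.2.2 (i, j') hj' (i', j) hi'

lemma gridClique_product {S : Finset (Fin m × Fin n)} {R : Finset (Fin m)}
    {T : Finset (Fin n)} (hR : R.Nonempty) (hT : T.Nonempty) (hsub : R ×ˢ T ⊆ S) :
    IsGridClique S (R ×ˢ T) := by
  refine ⟨hR.product hT, hsub, ?_⟩
  rintro ⟨a, b⟩ hab ⟨c, d⟩ hcd
  simp only [Finset.mem_product] at *
  exact ⟨hab.1, hcd.2⟩

lemma rowsOf_product {R : Finset (Fin m)} {T : Finset (Fin n)} (hT : T.Nonempty) :
    rowsOf (R ×ˢ T) = R := by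
  ext i; simp only [mem_rowsOf, Finset.mem_product]
  exact ⟨fun ⟨j, h⟩ => h.1, fun h => ⟨hT.choose, h, hT.choose_spec⟩⟩

lemma colsOf_product {R : Finset (Fin m)} {T : Finset (Fin n)} (hR : R.Nonempty) :
    colsOf (R ×ˢ T) = T := by
  ext j; simp only [mem_colsOf, Finset.mem_product]
  exact ⟨fun ⟨i, h⟩ => h.2, fun h => ⟨hR.choose, hR.choose_spec, h⟩⟩

lemma exists_maxClique {S C : Finset (Fin m × Fin n)} (h : IsGridClique S C) :
    ∃ D, IsMaxClique S D ∧ C ⊆ D := by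
  classical
  set 𝒞 := S.powerset.filter (fun D => IsGridClique S D ∧ C ⊆ D) with h𝒞
  have hCmem : C ∈ 𝒞 := by
    simp only [h𝒞, Finset.mem_filter, Finset.mem_powerset]
    exact ⟨h.2.1, h, subset_rfl⟩
  obtain ⟨D, hD, hmax⟩ := Finset.exists_max_image 𝒞 Finset.card ⟨C, hCmem⟩
  simp only [h𝒞, Finset.mem_filter, Finset.mem_powerset] at hD
  refine ⟨D, ⟨hD.2.1, ?_⟩, hD.2.2⟩
  intro C' hC' hsub
  have hC'mem : C' ∈ 𝒞 := by
    simp only [h𝒞, Finset.mem_filter, Finset.mem_powerset]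
    exact ⟨hC'.2.1, hC', hD.2.2.trans hsub⟩
  exact Finset.eq_of_subset_of_card_le hsub (hmax C' hC'mem)

lemma rowsOf_nonempty {D : Finset (Fin m × Fin n)} (h : D.Nonempty) : (rowsOf D).Nonempty :=
  h.image _

lemma colsOf_nonempty {D : Finset (Fin m × Fin n)} (h : D.Nonempty) : (colsOf D).Nonempty :=
  h.image _

/-- rows ⊆ rows implies reverse containment on columns. -/
lemma cols_antitone {S Dα Dβ : Finset (Fin m × Fin n)} (hα : IsMaxClique S Dα)
    (hβ : IsMaxClique S Dβ) (hrows : rowsOf Dα ⊆ rowsOf Dβ) :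
    colsOf Dβ ⊆ colsOf Dα := by
  have hαne := hα.1.1
  have hβne := hβ.1.1
  have hRne : (rowsOf Dα).Nonempty := rowsOf_nonempty hαne
  have hTne : (colsOf Dα ∪ colsOf Dβ).Nonempty := ((colsOf_nonempty hαne).mono
    Finset.subset_union_left)
  have hsub : rowsOf Dα ×ˢ (colsOf Dα ∪ colsOf Dβ) ⊆ S := by
    rintro ⟨i, j⟩ hij
    simp only [Finset.mem_product, Finset.mem_union] at hij
    rcases hij.2 with hj | hj
    · exact hα.1.2.1 ((gridClique_eq_product hα.1).symm ▸
        (Finset.mem_product.2 ⟨hij.1, hj⟩))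
    · exact hβ.1.2.1 ((gridClique_eq_product hβ.1).symm ▸
        (Finset.mem_product.2 ⟨hrows hij.1, hj⟩))
  have hclique := gridClique_product hRne hTne hsub
  have hsub2 : Dα ⊆ rowsOf Dα ×ˢ (colsOf Dα ∪ colsOf Dβ) := by
    intro p hp
    rw [gridClique_eq_product hα.1] at hp
    exact Finset.product_subset_product subset_rfl Finset.subset_union_left hp
  have heq := hα.2 _ hclique hsub2
  have : colsOf Dα = colsOf Dα ∪ colsOf Dβ := by
    nth_rewrite 1 [heq]
    rw [colsOf_product hRne]
  intro j hj
  rw [this]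
  exact Finset.mem_union_right _ hj

/-- cols ⊆ cols implies reverse containment on rows. -/
lemma rows_antitone {S Dα Dβ : Finset (Fin m × Fin n)} (hα : IsMaxClique S Dα)
    (hβ : IsMaxClique S Dβ) (hcols : colsOf Dα ⊆ colsOf Dβ) :
    rowsOf Dβ ⊆ rowsOf Dα := by
  have hαne := hα.1.1
  have hβne := hβ.1.1
  have hTne : (colsOf Dα).Nonempty := colsOf_nonempty hαne
  have hRne : (rowsOf Dα ∪ rowsOf Dβ).Nonempty := ((rowsOf_nonempty hαne).mono
    Finset.subset_union_left)
  have hsub : (rowsOf Dα ∪ rowsOf Dβ) ×ˢ colsOf Dα ⊆ S := by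
    rintro ⟨i, j⟩ hij
    simp only [Finset.mem_product, Finset.mem_union] at hij
    rcases hij.1 with hi | hi
    · exact hα.1.2.1 ((gridClique_eq_product hα.1).symm ▸
        (Finset.mem_product.2 ⟨hi, hij.2⟩))
    · exact hβ.1.2.1 ((gridClique_eq_product hβ.1).symm ▸
        (Finset.mem_product.2 ⟨hi, hcols hij.2⟩))
  have hclique := gridClique_product hRne hTne hsub
  have hsub2 : Dα ⊆ (rowsOf Dα ∪ rowsOf Dβ) ×ˢ colsOf Dα := by
    intro p hp
    rw [gridClique_eq_product hα.1] at hp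
    exact Finset.product_subset_product Finset.subset_union_left subset_rfl hp
  have heq := hα.2 _ hclique hsub2
  have : rowsOf Dα = rowsOf Dα ∪ rowsOf Dβ := by
    nth_rewrite 1 [heq]
    rw [rowsOf_product hTne]
  intro i hi
  rw [this]
  exact Finset.mem_union_right _ hi

end QIAux
namespace QIAux

lemma mem_maxCliques {S D : Finset (Fin m × Fin n)} :
    D ∈ maxCliques S ↔ IsMaxClique S D := by
  simp only [maxCliques, Finset.mem_filter, Finset.mem_powerset]
  exact ⟨fun h => h.2, fun h => ⟨h.1.2.1, h⟩⟩

lemma maxClique_mem {S D : Finset (Fin m × Fin n)} (h : IsMaxClique S D) {i : Fin m}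
    {j : Fin n} (hi : i ∈ rowsOf D) (hj : j ∈ colsOf D) : (i, j) ∈ D := by
  rw [gridClique_eq_product h.1]
  exact Finset.mem_product.2 ⟨hi, hj⟩

lemma j0_mem_cols {S : Finset (Fin m × Fin n)} {j₀ : Fin n} {D : Finset (Fin m × Fin n)}
    (h : PNode S j₀ D) : j₀ ∈ colsOf D := by
  obtain ⟨i, hi⟩ := h.2
  exact mem_colsOf.2 ⟨i, hi⟩

/-- Step A: intersection of a covered clique with `Dβ`. -/
lemma inter_eq_product {S : Finset (Fin m × Fin n)} {j₀ : Fin n}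
    {Dβ Dα : Finset (Fin m × Fin n)} (hcov : PCovers S j₀ Dβ Dα) :
    Dα ∩ Dβ = rowsOf Dα ×ˢ colsOf Dβ := by
  obtain ⟨hα, hβ, hss, -⟩ := hcov
  have hrows : rowsOf Dα ⊆ rowsOf Dβ := hss.subset
  have hcols : colsOf Dβ ⊆ colsOf Dα := cols_antitone hα.1 hβ.1 hrows
  ext ⟨i, j⟩
  simp only [Finset.mem_inter]
  constructor
  · rintro ⟨h1, h2⟩
    exact Finset.mem_product.2 ⟨mem_rowsOf.2 ⟨j, h1⟩, mem_colsOf.2 ⟨i, h2⟩⟩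
  · intro h
    obtain ⟨hi, hj⟩ := Finset.mem_product.1 h
    exact ⟨maxClique_mem hα.1 hi (hcols hj), maxClique_mem hβ.1 (hrows hi) hj⟩

/-- rows of covered cliques are inside rows of `Dβ`. -/
lemma covered_rows_subset {S : Finset (Fin m × Fin n)} {j₀ : Fin n}
    {Dβ Dα : Finset (Fin m × Fin n)} (hcov : PCovers S j₀ Dβ Dα) :
    rowsOf Dα ⊆ rowsOf Dβ := hcov.2.2.1.subset

/-- Step C: an uncovered row of `Dβ` has its full support inside the columns of `Dβ`. -/
lemma uncovered_row_support {S : Finset (Fin m × Fin n)} {j₀ : Fin n}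
    {Dβ : Finset (Fin m × Fin n)} (hβ : PNode S j₀ Dβ) {i : Fin m} (hi : i ∈ rowsOf Dβ)
    (hnc : ∀ Dα, PCovers S j₀ Dβ Dα → i ∉ rowsOf Dα) {j : Fin n} (hj : (i, j) ∈ S) :
    j ∈ colsOf Dβ := by
  classical
  by_contra hjT
  -- the full support of row `i`
  set Ti : Finset (Fin n) := Finset.univ.filter (fun j' => (i, j') ∈ S) with hTi
  have hTmem : ∀ j', j' ∈ Ti ↔ (i, j') ∈ S := by
    intro j'; simp [hTi]
  have hclique : IsGridClique S ({i} ×ˢ Ti) := by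
    refine gridClique_product (Finset.singleton_nonempty i) ⟨j, (hTmem j).2 hj⟩ ?_
    rintro ⟨a, b⟩ hab
    obtain ⟨ha, hb⟩ := Finset.mem_product.1 hab
    rw [Finset.mem_singleton] at ha
    subst ha
    exact (hTmem b).1 hb
  obtain ⟨Dδ, hδmax, hδsub⟩ := exists_maxClique hclique
  have hTβTi : colsOf Dβ ⊆ Ti := by
    intro j' hj'
    exact (hTmem j').2 (hβ.1.1.2.1 (maxClique_mem hβ.1 hi hj'))
  have hTiδ : Ti ⊆ colsOf Dδ := by
    intro j' hj'
    exact mem_colsOf.2 ⟨i, hδsub (Finset.mem_product.2 ⟨Finset.mem_singleton_self i, hj'⟩)⟩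
  have hiδ : i ∈ rowsOf Dδ :=
    mem_rowsOf.2 ⟨j, hδsub (Finset.mem_product.2 ⟨Finset.mem_singleton_self i,
      (hTmem j).2 hj⟩)⟩
  have hcolsub : colsOf Dβ ⊆ colsOf Dδ := hTβTi.trans hTiδ
  have hrowsub : rowsOf Dδ ⊆ rowsOf Dβ := rows_antitone hβ.1 hδmax hcolsub
  have hδnode : PNode S j₀ Dδ :=
    ⟨hδmax, ⟨i, maxClique_mem hδmax hiδ (hcolsub (j0_mem_cols hβ))⟩⟩
  have hssub : rowsOf Dδ ⊂ rowsOf Dβ := by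
    refine ⟨hrowsub, fun hsub2 => ?_⟩
    have : colsOf Dδ ⊆ colsOf Dβ := cols_antitone hβ.1 hδmax hsub2
    exact hjT (this (hTiδ ((hTmem j).2 hj)))
  -- choose a node with maximal row set between `Dδ` and `Dβ`
  set 𝒩 : Finset (Finset (Fin m × Fin n)) := (maxCliques S).filter
    (fun D => PNode S j₀ D ∧ rowsOf Dδ ⊆ rowsOf D ∧ rowsOf D ⊂ rowsOf Dβ) with h𝒩
  have hδ𝒩 : Dδ ∈ 𝒩 := by
    simp only [h𝒩, Finset.mem_filter]
    exact ⟨mem_maxCliques.2 hδmax, hδnode, subset_rfl, hssub⟩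
  obtain ⟨Dγ, hγmem, hγmax⟩ := Finset.exists_max_image 𝒩 (fun D => (rowsOf D).card)
    ⟨Dδ, hδ𝒩⟩
  simp only [h𝒩, Finset.mem_filter] at hγmem
  obtain ⟨-, hγnode, hδγ, hγβ⟩ := hγmem
  have hcov : PCovers S j₀ Dβ Dγ := by
    refine ⟨hγnode, hβ, hγβ, ?_⟩
    rintro ⟨Dγ', hnode', h1', h2'⟩
    have hmem' : Dγ' ∈ 𝒩 := by
      simp only [h𝒩, Finset.mem_filter]
      exact ⟨mem_maxCliques.2 hnode'.1, hnode', hδγ.trans h1'.subset, h2'⟩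
    exact absurd (hγmax Dγ' hmem') (not_le.2 (Finset.card_lt_card h1'))
  exact hnc Dγ hcov (hδγ hiδ)

end QIAux
namespace QIAux

lemma qiGraph_adj_cases {S : Finset (Fin m × Fin n)} {x y : Fin m ⊕ Fin n}
    (h : (qiGraph m n S).Adj x y) :
    ∃ i j, (i, j) ∈ S ∧ ((x = Sum.inl i ∧ y = Sum.inr j) ∨ (x = Sum.inr j ∧ y = Sum.inl i)) := by
  simp only [qiGraph, SimpleGraph.fromRel_adj] at h
  rcases h.2 with ⟨p, hp, h1, h2⟩ | ⟨p, hp, h1, h2⟩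
  · exact ⟨p.1, p.2, hp, Or.inl ⟨h1, h2⟩⟩
  · exact ⟨p.1, p.2, hp, Or.inr ⟨h2, h1⟩⟩

lemma no_middle_vertex {S : Finset (Fin m × Fin n)}
    (hS : DoublyChordalBipartite (qiGraph m n S))
    {i i₁ i₂ : Fin m} {j₀ j₁ j₂ : Fin n}
    (hii₁ : i₁ ≠ i) (hii₂ : i₂ ≠ i) (hi12 : i₁ ≠ i₂)
    (hj01 : j₀ ≠ j₁) (hj02 : j₀ ≠ j₂) (hj12 : j₁ ≠ j₂)
    (e1 : (i₁, j₁) ∈ S) (e2 : (i, j₁) ∈ S) (e3 : (i, j₂) ∈ S) (e4 : (i₂, j₂) ∈ S)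
    (e5 : (i₂, j₀) ∈ S) (e6 : (i₁, j₀) ∈ S)
    (h12 : (i₁, j₂) ∉ S) (h21 : (i₂, j₁) ∉ S) : False := by
  classical
  set G := qiGraph m n S with hG
  have a1 : G.Adj (.inl i₁) (.inr j₁) := qiGraph_adj.2 e1
  have a2 : G.Adj (.inr j₁) (.inl i) := (qiGraph_adj.2 e2).symm
  have a3 : G.Adj (.inl i) (.inr j₂) := qiGraph_adj.2 e3
  have a4 : G.Adj (.inr j₂) (.inl i₂) := (qiGraph_adj.2 e4).symm
  have a5 : G.Adj (.inl i₂) (.inr j₀) := qiGraph_adj.2 e5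
  have a6 : G.Adj (.inr j₀) (.inl i₁) := (qiGraph_adj.2 e6).symm
  set c : G.Walk (.inl i₁) (.inl i₁) :=
    .cons a1 (.cons a2 (.cons a3 (.cons a4 (.cons a5 (.cons a6 .nil))))) with hc
  have hcyc : c.IsCycle := by
    rw [SimpleGraph.Walk.isCycle_def, SimpleGraph.Walk.isTrail_def]
    refine ⟨?_, by simp [hc], ?_⟩
    · simp [hc, Sym2.eq_iff, hii₁, hii₂, hi12, hj01, hj02, hj12, hii₁.symm,
        hii₂.symm, hi12.symm, hj01.symm, hj02.symm, hj12.symm]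
    · simp [hc, hii₁, hii₂, hi12, hj01, hj02, hj12, hii₁.symm, hii₂.symm,
        hi12.symm, hj01.symm, hj02.symm, hj12.symm]
  have hlen : 6 ≤ c.length := by simp [hc]
  obtain ⟨f₁, f₂, hfne, hch1, hch2⟩ := hS _ c hcyc hlen
  have key : ∀ a b, (a, b) ∈ S → Sum.inl a ∈ c.support → Sum.inr b ∈ c.support →
      s(Sum.inl a, Sum.inr b) ∉ c.edges → a = i ∧ b = j₀ := by
    intro a b hab ha hb hne
    have ha' : a = i₁ ∨ a = i ∨ a = i₂ := by
      have h := ha; simp [hc] at h; tauto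
    have hb' : b = j₁ ∨ b = j₂ ∨ b = j₀ := by
      have h := hb; simp [hc] at h; tauto
    rcases ha' with rfl | rfl | rfl <;> rcases hb' with rfl | rfl | rfl
    · exact absurd (by simp [hc, Sym2.eq_swap]) hne
    · exact absurd hab h12
    · exact absurd (by simp [hc, Sym2.eq_swap]) hne
    · exact absurd (by simp [hc, Sym2.eq_swap]) hne
    · exact absurd (by simp [hc, Sym2.eq_swap]) hne
    · exact ⟨rfl, rfl⟩
    · exact absurd hab h21
    · exact absurd (by simp [hc, Sym2.eq_swap]) hne
    · exact absurd (by simp [hc, Sym2.eq_swap]) hne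
  have hform : ∀ f, IsChord G c f → f = s(Sum.inl i, Sum.inr j₀) := by
    intro f hf
    obtain ⟨hfe, hfne2, hfs⟩ := hf
    induction f using Sym2.ind with
    | _ x y =>
      rw [SimpleGraph.mem_edgeSet] at hfe
      obtain ⟨a, b, hab, hcase⟩ := qiGraph_adj_cases hfe
      rcases hcase with ⟨rfl, rfl⟩ | ⟨rfl, rfl⟩
      · obtain ⟨rfl, rfl⟩ := key a b hab (hfs _ (by simp)) (hfs _ (by simp)) hfne2
        rfl
      · rw [Sym2.eq_swap] at hfne2 ⊢
        obtain ⟨rfl, rfl⟩ := key a b hab (hfs _ (by simp)) (hfs _ (by simp)) hfne2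
        rfl
  exact hfne ((hform f₁ hch1).trans (hform f₂ hch2).symm)

end QIAux
namespace QIAux

/-- Step B: distinct cliques covered by `Dβ` have disjoint row sets. -/
lemma covered_rows_disjoint {S : Finset (Fin m × Fin n)}
    (hS : DoublyChordalBipartite (qiGraph m n S)) {j₀ : Fin n}
    {Dβ Dα Dα' : Finset (Fin m × Fin n)} (h1 : PCovers S j₀ Dβ Dα)
    (h2 : PCovers S j₀ Dβ Dα') (hne : Dα ≠ Dα') :
    Disjoint (rowsOf Dα) (rowsOf Dα') := by
  classical
  rw [Finset.disjoint_left]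
  intro i hiα hiα'
  obtain ⟨hαn, hβn, hssα, hnomidα⟩ := h1
  obtain ⟨hα'n, -, hssα', hnomidα'⟩ := h2
  have hαm := hαn.1
  have hα'm := hα'n.1
  have hβm := hβn.1
  -- row sets of the two covered cliques are incomparable
  have hnotsub : ¬ rowsOf Dα ⊆ rowsOf Dα' := by
    intro hsub
    rcases eq_or_ssubset_of_subset hsub with heq | hss
    · have hc1 : colsOf Dα' ⊆ colsOf Dα := cols_antitone hαm hα'm hsub
      have hc2 : colsOf Dα ⊆ colsOf Dα' := cols_antitone hα'm hαm heq.ge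
      have : Dα = Dα' := by
        rw [gridClique_eq_product hαm.1, gridClique_eq_product hα'm.1, heq,
          Finset.Subset.antisymm hc2 hc1]
      exact hne this
    · exact hnomidα ⟨Dα', hα'n, hss, hssα'⟩
  have hnotsub' : ¬ rowsOf Dα' ⊆ rowsOf Dα := by
    intro hsub
    rcases eq_or_ssubset_of_subset hsub with heq | hss
    · have hc1 : colsOf Dα ⊆ colsOf Dα' := cols_antitone hα'm hαm hsub
      have hc2 : colsOf Dα' ⊆ colsOf Dα := cols_antitone hαm hα'm heq.ge
      have : Dα = Dα' := by
        rw [gridClique_eq_product hαm.1, gridClique_eq_product hα'm.1, heq,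
          Finset.Subset.antisymm hc2 hc1]
      exact hne this
    · exact hnomidα' ⟨Dα, hαn, hss, hssα⟩
  -- key dichotomy by the chord argument
  have hdich : (∀ i₁ ∈ rowsOf Dα, ∀ j₂ ∈ colsOf Dα', (i₁, j₂) ∈ S) ∨
      (∀ i₂ ∈ rowsOf Dα', ∀ j₁ ∈ colsOf Dα, (i₂, j₁) ∈ S) := by
    by_contra hcon
    push_neg at hcon
    obtain ⟨⟨i₁, hi₁, j₂, hj₂, h12⟩, ⟨i₂, hi₂, j₁, hj₁, h21⟩⟩ := hcon
    have hi₁α' : i₁ ∉ rowsOf Dα' := fun h => h12 (hα'm.1.2.1 (maxClique_mem hα'm h hj₂))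
    have hi₂α : i₂ ∉ rowsOf Dα := fun h => h21 (hαm.1.2.1 (maxClique_mem hαm h hj₁))
    have hj₂α : j₂ ∉ colsOf Dα := fun h => h12 (hαm.1.2.1 (maxClique_mem hαm hi₁ h))
    have hj₁α' : j₁ ∉ colsOf Dα' := fun h => h21 (hα'm.1.2.1 (maxClique_mem hα'm hi₂ h))
    have hj₀α : j₀ ∈ colsOf Dα := cols_antitone hαm hβm hssα.subset (j0_mem_cols hβn)
    have hj₀α' : j₀ ∈ colsOf Dα' := cols_antitone hα'm hβm hssα'.subset (j0_mem_cols hβn)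
    refine no_middle_vertex hS (i := i) (i₁ := i₁) (i₂ := i₂) (j₀ := j₀) (j₁ := j₁)
      (j₂ := j₂) ?_ ?_ ?_ ?_ ?_ ?_ ?_ ?_ ?_ ?_ ?_ ?_ h12 h21
    · exact fun h => hi₁α' (h ▸ hiα')
    · exact fun h => hi₂α (h ▸ hiα)
    · exact fun h => hi₂α (h ▸ hi₁)
    · exact fun h => hj₁α' (h ▸ hj₀α')
    · exact fun h => hj₂α (h ▸ hj₀α)
    · exact fun h => hj₂α (h ▸ hj₁)
    · exact hαm.1.2.1 (maxClique_mem hαm hi₁ hj₁)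
    · exact hαm.1.2.1 (maxClique_mem hαm hiα hj₁)
    · exact hα'm.1.2.1 (maxClique_mem hα'm hiα' hj₂)
    · exact hα'm.1.2.1 (maxClique_mem hα'm hi₂ hj₂)
    · exact hα'm.1.2.1 (maxClique_mem hα'm hi₂ hj₀α')
    · exact hαm.1.2.1 (maxClique_mem hαm hi₁ hj₀α)
  rcases hdich with hd | hd
  · -- then Dα extends to all columns of Dα', so colsOf Dα' ⊆ colsOf Dα
    have hsub : rowsOf Dα ×ˢ (colsOf Dα ∪ colsOf Dα') ⊆ S := by
      rintro ⟨a, b⟩ hab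
      obtain ⟨ha, hb⟩ := Finset.mem_product.1 hab
      rcases Finset.mem_union.1 hb with hb | hb
      · exact hαm.1.2.1 (maxClique_mem hαm ha hb)
      · exact hd a ha b hb
    have hclique := gridClique_product (rowsOf_nonempty hαm.1.1)
      (((colsOf_nonempty hαm.1.1)).mono Finset.subset_union_left) hsub
    have hsub2 : Dα ⊆ rowsOf Dα ×ˢ (colsOf Dα ∪ colsOf Dα') := by
      intro p hp
      rw [gridClique_eq_product hαm.1] at hp
      exact Finset.product_subset_product subset_rfl Finset.subset_union_left hp
    have heq := hαm.2 _ hclique hsub2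
    have hcols : colsOf Dα' ⊆ colsOf Dα := by
      have : colsOf Dα = colsOf Dα ∪ colsOf Dα' := by
        nth_rewrite 1 [heq]
        rw [colsOf_product (rowsOf_nonempty hαm.1.1)]
      intro b hb
      rw [this]
      exact Finset.mem_union_right _ hb
    exact hnotsub (rows_antitone hα'm hαm hcols)
  · have hsub : rowsOf Dα' ×ˢ (colsOf Dα' ∪ colsOf Dα) ⊆ S := by
      rintro ⟨a, b⟩ hab
      obtain ⟨ha, hb⟩ := Finset.mem_product.1 hab
      rcases Finset.mem_union.1 hb with hb | hb
      · exact hα'm.1.2.1 (maxClique_mem hα'm ha hb)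
      · exact hd a ha b hb
    have hclique := gridClique_product (rowsOf_nonempty hα'm.1.1)
      (((colsOf_nonempty hα'm.1.1)).mono Finset.subset_union_left) hsub
    have hsub2 : Dα' ⊆ rowsOf Dα' ×ˢ (colsOf Dα' ∪ colsOf Dα) := by
      intro p hp
      rw [gridClique_eq_product hα'm.1] at hp
      exact Finset.product_subset_product subset_rfl Finset.subset_union_left hp
    have heq := hα'm.2 _ hclique hsub2
    have hcols : colsOf Dα ⊆ colsOf Dα' := by
      have : colsOf Dα' = colsOf Dα' ∪ colsOf Dα := by
        nth_rewrite 1 [heq]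
        rw [colsOf_product (rowsOf_nonempty hα'm.1.1)]
      intro b hb
      rw [this]
      exact Finset.mem_union_right _ hb
    exact hnotsub' (rows_antitone hαm hα'm hcols)

end QIAux

open QIAux

/-- if `Dβ` is a maximal clique meeting column `j₀`, then
`Dβ⁺` equals the sum of the full row marginals over the rows of `Dβ` not lying in any
clique covered by `Dβ` in `P(j₀)`, plus the sum of `(Dα ∩ Dβ)⁺` over the cliques `Dα`
covered by `Dβ`. -/
theorem sum_of_unfactored_terms (m n : ℕ) (S : Finset (Fin m × Fin n))
    (hS : DoublyChordalBipartite (qiGraph m n S)) (u : Fin m × Fin n → ℝ) (j₀ : Fin n)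
    (Dβ : Finset (Fin m × Fin n)) (hβ : PNode S j₀ Dβ) :
    cliqueSum u Dβ =
      (∑ i ∈ rowsOf Dβ \ ((maxCliques S).filter (PCovers S j₀ Dβ)).biUnion rowsOf,
        rowMarg S u i) +
      ∑ Dα ∈ (maxCliques S).filter (PCovers S j₀ Dβ), cliqueSum u (Dα ∩ Dβ) := by
  classical
  have hβm := hβ.1
  set T := colsOf Dβ with hT
  set Cov := (maxCliques S).filter (PCovers S j₀ Dβ) with hCov
  have hCovMem : ∀ Dα, Dα ∈ Cov ↔ PCovers S j₀ Dβ Dα := by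
    intro Dα
    simp only [hCov, Finset.mem_filter, mem_maxCliques]
    exact ⟨fun h => h.2, fun h => ⟨h.1.1, h⟩⟩
  set U := Cov.biUnion rowsOf with hU
  set f : Fin m → ℝ := fun i => ∑ j ∈ T, u (i, j) with hf
  have hβsum : cliqueSum u Dβ = ∑ i ∈ rowsOf Dβ, f i := by
    rw [cliqueSum]
    nth_rewrite 1 [gridClique_eq_product hβm.1]
    rw [Finset.sum_product]
  have hrow : ∀ i ∈ rowsOf Dβ \ U, rowMarg S u i = f i := by
    intro i hi
    obtain ⟨hiR, hiU⟩ := Finset.mem_sdiff.1 hi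
    have hnc : ∀ Dα, PCovers S j₀ Dβ Dα → i ∉ rowsOf Dα := by
      intro Dα hcov hmem
      exact hiU (Finset.mem_biUnion.2 ⟨Dα, (hCovMem Dα).2 hcov, hmem⟩)
    have hfil : S.filter (fun x => x.1 = i) = {i} ×ˢ T := by
      ext ⟨a, b⟩
      simp only [Finset.mem_filter, Finset.mem_product, Finset.mem_singleton]
      constructor
      · rintro ⟨hab, rfl⟩
        exact ⟨rfl, uncovered_row_support hβ hiR hnc hab⟩
      · rintro ⟨rfl, hb⟩
        exact ⟨hβm.1.2.1 (maxClique_mem hβm hiR hb), rfl⟩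
    rw [rowMarg, hfil, Finset.sum_product, Finset.sum_singleton]
  have hαsum : ∀ Dα ∈ Cov, cliqueSum u (Dα ∩ Dβ) = ∑ i ∈ rowsOf Dα, f i := by
    intro Dα hα
    rw [cliqueSum, inter_eq_product ((hCovMem Dα).1 hα), Finset.sum_product]
  have hUsub : U ⊆ rowsOf Dβ := by
    rw [hU]
    refine Finset.biUnion_subset.2 ?_
    intro Dα hα
    exact covered_rows_subset ((hCovMem Dα).1 hα)
  have hdisj : (Cov : Set (Finset (Fin m × Fin n))).PairwiseDisjoint rowsOf := by
    intro Dα hα Dα' hα' hne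
    exact covered_rows_disjoint hS ((hCovMem Dα).1 (by simpa using hα))
      ((hCovMem Dα').1 (by simpa using hα')) hne
  have hbi : ∑ i ∈ U, f i = ∑ Dα ∈ Cov, ∑ i ∈ rowsOf Dα, f i := by
    rw [hU]
    exact Finset.sum_biUnion hdisj
  calc cliqueSum u Dβ = ∑ i ∈ rowsOf Dβ, f i := hβsum
    _ = (∑ i ∈ rowsOf Dβ \ U, f i) + ∑ i ∈ U, f i := (Finset.sum_sdiff hUsub).symm
    _ = (∑ i ∈ rowsOf Dβ \ U, rowMarg S u i) + ∑ Dα ∈ Cov, cliqueSum u (Dα ∩ Dβ) := by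
        rw [hbi]
        refine congrArg₂ (· + ·) ?_ ?_
        · exact (Finset.sum_congr rfl hrow).symm
        · exact (Finset.sum_congr rfl hαsum).symm
end
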